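/- Let 𝔒¹ be the set of germs f at 0 ∈ ℂ^d vanishing at 0 with f(z) = O(‖z'‖ + |z₀|^{1/2}), and define 𝔒^k = 𝔒^{k−1}·𝔒¹ (products). Then f ∈ 𝔒^k if and only if f(z) = O(‖z'‖^k + |z₀|^{k/2}) as z → 0. -/

import Mathlib

open Asymptotics

/-- Germs (represented by functions) on ℂ × ℂ^{d−1} vanishing at 0 of
Heisenberg-type order 1: `f(z) = O(‖z'‖ + |z₀|^{1/2})` as `z → 0`. -/
def IsO1 (m : ℕ) (f : (ℂ × (Fin m → ℂ)) → ℂ) : Prop :=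
  f 0 = 0 ∧ f =O[nhds 0] fun z : ℂ × (Fin m → ℂ) => ‖z.2‖ + Real.sqrt ‖z.1‖

/-- `𝔒^k`: finite sums of `k`-fold products of elements of `𝔒¹`
(equivalently `𝔒^k = 𝔒^{k−1}·𝔒¹` with finite linear combinations of products). -/
def Ok (m k : ℕ) : Set ((ℂ × (Fin m → ℂ)) → ℂ) :=
  AddSubmonoid.closure
    {f | ∃ g : Fin k → (ℂ × (Fin m → ℂ)) → ℂ,
      (∀ i, IsO1 m (g i)) ∧ f = fun z => ∏ i, g i z}

open Filter

noncomputable def Hfun (m : ℕ) (z : ℂ × (Fin m → ℂ)) : ℝ := ‖z.2‖ + Real.sqrt ‖z.1‖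

lemma Hfun_nonneg (m : ℕ) (z : ℂ × (Fin m → ℂ)) : 0 ≤ Hfun m z :=
  add_nonneg (norm_nonneg _) (Real.sqrt_nonneg _)

lemma Hfun_eq_zero (m : ℕ) {z : ℂ × (Fin m → ℂ)} (h : Hfun m z = 0) : z = 0 := by
  obtain ⟨h2, h1⟩ := (add_eq_zero_iff_of_nonneg (norm_nonneg _) (Real.sqrt_nonneg _)).mp h
  have h1' : ‖z.1‖ = 0 := (Real.sqrt_eq_zero (norm_nonneg _)).mp h1
  exact Prod.ext (norm_eq_zero.mp h1') (norm_eq_zero.mp h2)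

lemma rpow_half_eq (m k : ℕ) (z : ℂ × (Fin m → ℂ)) :
    ‖z.1‖ ^ ((k : ℝ) / 2) = (Real.sqrt ‖z.1‖) ^ k := by
  rw [Real.sqrt_eq_rpow, ← Real.rpow_natCast (‖z.1‖ ^ ((1:ℝ)/2)) k,
    ← Real.rpow_mul (norm_nonneg _)]
  ring_nf

lemma target_le (m k : ℕ) (z : ℂ × (Fin m → ℂ)) :
    ‖z.2‖ ^ k + ‖z.1‖ ^ ((k : ℝ) / 2) ≤ 2 * Hfun m z ^ k := by
  rw [rpow_half_eq, two_mul]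
  exact add_le_add
    (pow_le_pow_left₀ (norm_nonneg _) (le_add_of_nonneg_right (Real.sqrt_nonneg _)) k)
    (pow_le_pow_left₀ (Real.sqrt_nonneg _) (le_add_of_nonneg_left (norm_nonneg _)) k)

lemma le_target (m k : ℕ) (z : ℂ × (Fin m → ℂ)) :
    Hfun m z ^ k ≤ 2 ^ k * (‖z.2‖ ^ k + ‖z.1‖ ^ ((k : ℝ) / 2)) := by
  rw [rpow_half_eq]
  calc Hfun m z ^ k ≤ (2 * max ‖z.2‖ (Real.sqrt ‖z.1‖)) ^ k := by
        apply pow_le_pow_left₀ (Hfun_nonneg m z)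
        rw [two_mul]; exact add_le_add (le_max_left _ _) (le_max_right _ _)
    _ = 2 ^ k * max ‖z.2‖ (Real.sqrt ‖z.1‖) ^ k := mul_pow _ _ _
    _ ≤ 2 ^ k * (‖z.2‖ ^ k + (Real.sqrt ‖z.1‖) ^ k) := by
        apply mul_le_mul_of_nonneg_left _ (by positivity)
        rcases max_cases ‖z.2‖ (Real.sqrt ‖z.1‖) with ⟨h, _⟩ | ⟨h, _⟩ <;> rw [h]
        · exact le_add_of_nonneg_right (by positivity)
        · exact le_add_of_nonneg_left (by positivity)

lemma target_nonneg (m k : ℕ) (z : ℂ × (Fin m → ℂ)) :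
    0 ≤ ‖z.2‖ ^ k + ‖z.1‖ ^ ((k : ℝ) / 2) := by positivity

lemma Hpow_isBigO (m k : ℕ) :
    (fun z => Hfun m z ^ k) =O[nhds (0 : ℂ × (Fin m → ℂ))]
      fun z => ‖z.2‖ ^ k + ‖z.1‖ ^ ((k : ℝ) / 2) := by
  apply IsBigO.of_bound (2 ^ k)
  filter_upwards with z
  rw [Real.norm_of_nonneg (pow_nonneg (Hfun_nonneg m z) k),
    Real.norm_of_nonneg (target_nonneg m k z)]
  exact le_target m k z

lemma target_isBigO_Hpow (m k : ℕ) :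
    (fun z : ℂ × (Fin m → ℂ) => ‖z.2‖ ^ k + ‖z.1‖ ^ ((k : ℝ) / 2)) =O[nhds 0]
      fun z => Hfun m z ^ k := by
  apply IsBigO.of_bound 2
  filter_upwards with z
  rw [Real.norm_of_nonneg (pow_nonneg (Hfun_nonneg m z) k),
    Real.norm_of_nonneg (target_nonneg m k z)]
  exact target_le m k z

lemma prod_isBigO (m : ℕ) {k : ℕ} (g : Fin k → (ℂ × (Fin m → ℂ)) → ℂ)
    (hg : ∀ i, IsO1 m (g i)) (s : Finset (Fin k)) :
    (fun z => ∏ i ∈ s, g i z) =O[nhds (0 : ℂ × (Fin m → ℂ))] fun z => Hfun m z ^ s.card := by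
  induction s using Finset.induction with
  | empty =>
      simpa using (isBigO_const_const (1:ℂ) (one_ne_zero (α := ℝ)) (nhds (0 : ℂ × (Fin m → ℂ))))
  | @insert a s ha ih =>
    have := ((hg a).2.mul ih)
    simp only [Finset.prod_insert ha, Finset.card_insert_of_notMem ha, pow_succ']
    exact this

lemma norm_target1 (m : ℕ) (z : ℂ × (Fin m → ℂ)) :
    ‖‖z.2‖ + Real.sqrt ‖z.1‖‖ = Hfun m z :=
  Real.norm_of_nonneg (Hfun_nonneg m z)

/-- For `k ≥ 1` and a germ `f` vanishing at 0,
`f ∈ 𝔒^k` iff `f(z) = O(‖z'‖^k + |z₀|^{k/2})` as `z → 0`. -/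
theorem stmt_13 (m k : ℕ) (hk : 1 ≤ k) (f : (ℂ × (Fin m → ℂ)) → ℂ)
    (h0 : f 0 = 0) :
    f ∈ Ok m k ↔
      f =O[nhds 0] fun z : ℂ × (Fin m → ℂ) => ‖z.2‖ ^ k + ‖z.1‖ ^ ((k : ℝ) / 2) := by
  constructor
  · intro hf
    have hf' : f ∈ AddSubmonoid.closure
        {f | ∃ g : Fin k → (ℂ × (Fin m → ℂ)) → ℂ,
          (∀ i, IsO1 m (g i)) ∧ f = fun z => ∏ i, g i z} := hf
    have key : f =O[nhds (0 : ℂ × (Fin m → ℂ))] fun z => Hfun m z ^ k := by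
      refine AddSubmonoid.closure_induction
        (motive := fun x _ => x =O[nhds (0 : ℂ × (Fin m → ℂ))] fun z => Hfun m z ^ k)
        ?_ ?_ ?_ hf'
      · rintro x ⟨g, hg, rfl⟩
        simpa using prod_isBigO m g hg Finset.univ
      · exact isBigO_zero _ _
      · intro x y _ _ px py
        exact px.add py
    exact key.trans (Hpow_isBigO m k)
  · intro hf
    obtain ⟨n, rfl⟩ : ∃ n, k = n + 1 := ⟨k - 1, (Nat.succ_pred_eq_of_pos hk).symm⟩
    set hC : (ℂ × (Fin m → ℂ)) → ℂ := fun z => ((Hfun m z : ℝ) : ℂ) with hCdef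
    have hnormC : ∀ z, ‖hC z‖ = Hfun m z := fun z => by
      rw [hCdef, Complex.norm_real, Real.norm_of_nonneg (Hfun_nonneg m z)]
    have hf' : f =O[nhds (0 : ℂ × (Fin m → ℂ))] fun z => Hfun m z ^ (n+1) :=
      hf.trans (target_isBigO_Hpow m (n+1))
    obtain ⟨c, hc0, hc⟩ := hf'.exists_nonneg
    rw [isBigOWith_iff] at hc
    have hc' : ∀ᶠ z in nhds (0 : ℂ × (Fin m → ℂ)), ‖f z‖ ≤ c * Hfun m z ^ (n+1) := by
      filter_upwards [hc] with z hz
      rwa [Real.norm_of_nonneg (pow_nonneg (Hfun_nonneg m z) _)] at hz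
    set g1 : (ℂ × (Fin m → ℂ)) → ℂ := fun z => f z / (hC z) ^ n with hg1def
    have hO1C : IsO1 m hC := by
      constructor
      · simp [hCdef, Hfun]
      · apply IsBigO.of_bound 1
        filter_upwards with z
        rw [hnormC z, norm_target1 m z, one_mul]
    have hO1g1 : IsO1 m g1 := by
      constructor
      · simp [hg1def, h0]
      · apply IsBigO.of_bound c
        filter_upwards [hc'] with z hz
        rw [norm_target1 m z, hg1def]
        simp only [norm_div, norm_pow, hnormC z]
        by_cases hz0 : Hfun m z = 0
        · have hfz : ‖f z‖ = 0 :=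
            le_antisymm (by simpa [hz0] using hz) (norm_nonneg _)
          simp [hfz, hz0]
        · have hp : 0 < Hfun m z ^ n :=
            pow_pos (lt_of_le_of_ne (Hfun_nonneg m z) (Ne.symm hz0)) n
          rw [div_le_iff₀ hp]
          calc ‖f z‖ ≤ c * Hfun m z ^ (n+1) := hz
            _ = c * Hfun m z * Hfun m z ^ n := by ring
    refine AddSubmonoid.subset_closure ?_
    refine ⟨fun i => if i = 0 then g1 else hC, ?_, ?_⟩
    · intro i
      by_cases hi : i = 0 <;> simp [hi, hO1g1, hO1C]
    · funext z
      have hprod : ∏ i : Fin (n+1), (if i = 0 then g1 else hC) z = g1 z * hC z ^ n := by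
        rw [Fin.prod_univ_succ]
        simp [Fin.succ_ne_zero]
      rw [hprod]
      by_cases hz0 : Hfun m z = 0
      · have hz' : z = 0 := Hfun_eq_zero m hz0
        subst hz'
        have hg10 : g1 0 = 0 := by simp [hg1def, h0]
        rw [hg10, zero_mul, h0]
      · have hne : hC z ≠ 0 := by
          simpa [hCdef] using hz0
        rw [hg1def]
        exact (div_mul_cancel₀ _ (pow_ne_zero n hne)).symm
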